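/- Let X be a compact pointed metric space and let ((x_n,y_n))_{n=1}^∞ be a Lipschitz interpolating sequence for Lip_0(X) in X² (x_n ≠ y_n). Then d(x_n, y_n) → 0 as n → ∞. -/

import Mathlib

open Filter Topology

/-!
If `d(x n, y n)` does not tend to `0`, compactness of `X × X` gives a subsequence along which
`(x n, y n)` converges to a pair `(a, b)` with `a ≠ b`. Interpolate the data that alternates
between `1` and `-1` along this subsequence (and is `0` elsewhere) by a Lipschitz `f`. Since `f`
is continuous, the difference quotients of `f` along the subsequence converge to
`(f a - f b) / d(a, b)`; but they are exactly the alternating signs, which do not converge.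
-/

theorem exists_subseq_tendsto_ne_of_not_tendsto_dist_zero {X : Type*} [MetricSpace X]
    [CompactSpace X] {x y : ℕ → X} (h : ¬Tendsto (fun n => dist (x n) (y n)) atTop (𝓝 0)) :
    ∃ p : X × X, p.1 ≠ p.2 ∧
      ∃ ψ : ℕ → ℕ, StrictMono ψ ∧ Tendsto (fun n => (x (ψ n), y (ψ n))) atTop (𝓝 p) := by
  obtain ⟨ε, hε, hfar⟩ : ∃ ε > 0, ∃ᶠ n in atTop, ε ≤ dist (x n) (y n) := by
    simpa [Metric.nhds_basis_ball.tendsto_right_iff, Real.dist_eq, frequently_atTop] using h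
  have hclosed : IsClosed {p : X × X | ε ≤ dist p.1 p.2} :=
    isClosed_le continuous_const continuous_dist
  obtain ⟨p, hp, ψ, hψ, hlim⟩ :=
    hclosed.isCompact.tendsto_subseq' (x := fun n => (x n, y n)) hfar
  exact ⟨p, dist_pos.1 (hε.trans_le hp), ψ, hψ, hlim⟩

theorem continuousAt_sub_div_dist {X : Type*} [MetricSpace X] {f : X → ℝ} (hf : Continuous f)
    {p : X × X} (hp : p.1 ≠ p.2) :
    ContinuousAt (fun q : X × X => (f q.1 - f q.2) / dist q.1 q.2) p :=
  ((hf.comp continuous_fst).sub (hf.comp continuous_snd)).continuousAt.div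
    continuous_dist.continuousAt (dist_ne_zero.2 hp)

theorem abs_extend_zero_le {ι κ : Type*} (ψ : ι → κ) {g : ι → ℝ} {C : ℝ} (hC : 0 ≤ C)
    (hg : ∀ i, |g i| ≤ C) (k : κ) : |Function.extend ψ g 0 k| ≤ C := by
  classical
  rw [Function.extend_def]
  split_ifs
  exacts [hg _, by simpa using hC]

theorem not_tendsto_neg_one_pow (L : ℝ) : ¬Tendsto (fun n : ℕ => (-1 : ℝ) ^ n) atTop (𝓝 L) := by
  intro h
  have hshift : Tendsto (fun n : ℕ => -(-1 : ℝ) ^ n) atTop (𝓝 L) := by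
    simpa [pow_succ] using (tendsto_add_atTop_iff_nat 1).2 h
  have hL : L = -L := tendsto_nhds_unique h (by simpa using hshift.neg)
  have habs : |L| = 1 := tendsto_nhds_unique h.abs (by simp)
  rw [show L = 0 by linarith] at habs
  norm_num at habs

theorem stmt17_general {X : Type*} [MetricSpace X] [CompactSpace X] (z : X) (x y : ℕ → X)
    (hinterp : ∀ α : ℕ → ℝ, (∃ C, ∀ n, |α n| ≤ C) →
      ∃ f : X → ℝ, f z = 0 ∧ (∃ K : ℝ, ∀ a b : X, |f a - f b| ≤ K * dist a b) ∧
        ∀ n, (f (x n) - f (y n)) / dist (x n) (y n) = α n) :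
    Filter.Tendsto (fun n => dist (x n) (y n)) Filter.atTop (nhds 0) := by
  by_contra h
  obtain ⟨p, hp, ψ, hψ, hlim⟩ := exists_subseq_tendsto_ne_of_not_tendsto_dist_zero h
  set α : ℕ → ℝ := Function.extend ψ (fun j => (-1) ^ j) 0
  have hα_bdd : ∀ n, |α n| ≤ 1 := abs_extend_zero_le ψ zero_le_one (by simp)
  obtain ⟨f, -, ⟨K, hK⟩, hf⟩ := hinterp α ⟨1, hα_bdd⟩
  have hfc : Continuous f :=
    (LipschitzWith.of_dist_le' (K := K) (by simpa [Real.dist_eq])).continuous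
  refine not_tendsto_neg_one_pow _ (((continuousAt_sub_div_dist hfc hp).tendsto.comp hlim).congr
    fun j => ?_)
  simp [hf, α, hψ.injective.extend_apply]

/-- Let `X` be a compact pointed metric space and
`((x n, y n))_{n∈ℕ}` a Lipschitz interpolating sequence for `Lip₀(X)` (with
`x n ≠ y n`). Then `d(x n, y n) → 0`. -/
theorem stmt17 {X : Type*} [MetricSpace X] [CompactSpace X] (z : X) (x y : ℕ → X)
    (hxy : ∀ n, x n ≠ y n)
    (hinterp : ∀ α : ℕ → ℝ, (∃ C, ∀ n, |α n| ≤ C) →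
      ∃ f : X → ℝ, f z = 0 ∧ (∃ K : ℝ, ∀ a b : X, |f a - f b| ≤ K * dist a b) ∧
        ∀ n, (f (x n) - f (y n)) / dist (x n) (y n) = α n) :
    Filter.Tendsto (fun n => dist (x n) (y n)) Filter.atTop (nhds 0) :=
  stmt17_general z x y hinterp
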